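/- Let r < (√3−1)/√2, let UVW be a Reuleaux triangle of width 1 with vertices U, V, W, and let M₁, M₂ be the midpoints of the circular arcs UV and UW. Then no closed disc of radius r contains all four points U, V, M₁, M₂. -/
import Mathlib


open Metric

set_option maxHeartbeats 1000000 in
/-- Let `U V W` be the vertices of a Reuleaux triangle of width 1 (an equilateral triangle
of side 1), and let `M₁`, `M₂` be the midpoints of the circular arcs `UV` (centered at `W`)
and `UW` (centered at `V`): the points at distance 1 from the opposite vertex on the ray
through the midpoint of the corresponding side. Then for `r < (√3 - 1)/√2`, no closed disc
of radius `r` contains all four points `U, V, M₁, M₂`. -/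
theorem no_disc_contains_four (U V W M₁ M₂ : EuclideanSpace ℝ (Fin 2))
    (hUV : dist U V = 1) (hVW : dist V W = 1) (hUW : dist U W = 1)
    (hM₁ : M₁ = W + (Real.sqrt 3 / 2)⁻¹ • (midpoint ℝ U V - W))
    (hM₂ : M₂ = V + (Real.sqrt 3 / 2)⁻¹ • (midpoint ℝ U W - V))
    (r : ℝ) (hr : r < (Real.sqrt 3 - 1) / Real.sqrt 2) (c : EuclideanSpace ℝ (Fin 2)) :
    ¬ (U ∈ closedBall c r ∧ V ∈ closedBall c r ∧
       M₁ ∈ closedBall c r ∧ M₂ ∈ closedBall c r) := by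
  rintro ⟨hUc, hVc, -, hM2c⟩
  set t := Real.sqrt 3 with hts
  have ht3 : t ^ 2 = 3 := Real.sq_sqrt (by norm_num)
  have ht0 : (0:ℝ) < t := Real.sqrt_pos.2 (by norm_num)
  have ht_lt : t < 2 := by nlinarith
  have ht_gt : (3:ℝ)/2 < t := by nlinarith
  have hr0 : 0 ≤ r := le_trans dist_nonneg (mem_closedBall.1 hUc)
  obtain ⟨u, hu⟩ : ∃ x : EuclideanSpace ℝ (Fin 2), x = U - c := ⟨_, rfl⟩
  obtain ⟨v, hv⟩ : ∃ x : EuclideanSpace ℝ (Fin 2), x = V - c := ⟨_, rfl⟩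
  obtain ⟨w, hw⟩ : ∃ x : EuclideanSpace ℝ (Fin 2), x = W - c := ⟨_, rfl⟩
  obtain ⟨X, hX⟩ : ∃ x : ℝ, x = @inner ℝ _ _ u u := ⟨_, rfl⟩
  obtain ⟨Y, hY⟩ : ∃ x : ℝ, x = @inner ℝ _ _ v v := ⟨_, rfl⟩
  obtain ⟨Z, hZ⟩ : ∃ x : ℝ, x = @inner ℝ _ _ w w := ⟨_, rfl⟩
  obtain ⟨A, hA⟩ : ∃ x : ℝ, x = @inner ℝ _ _ u v := ⟨_, rfl⟩
  obtain ⟨B, hB⟩ : ∃ x : ℝ, x = @inner ℝ _ _ u w := ⟨_, rfl⟩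
  obtain ⟨C, hC⟩ : ∃ x : ℝ, x = @inner ℝ _ _ v w := ⟨_, rfl⟩
  have expand : ∀ a b d : ℝ, (@inner ℝ _ _ (a • u + b • v + d • w) (a • u + b • v + d • w)) =
      a^2*X + b^2*Y + d^2*Z + 2*a*b*A + 2*a*d*B + 2*b*d*C := by
    intro a b d
    simp only [inner_add_left, inner_add_right, real_inner_smul_left, real_inner_smul_right]
    rw [hX, hY, hZ, hA, hB, hC, real_inner_comm v u, real_inner_comm w u, real_inner_comm w v]
    ring
  -- squared distance bounds for U and V
  have hXr : X ≤ r ^ 2 := by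
    have h := mem_closedBall.1 hUc
    rw [dist_eq_norm] at h
    rw [hX, hu, real_inner_self_eq_norm_sq]
    exact pow_le_pow_left₀ (norm_nonneg _) h 2
  have hYr : Y ≤ r ^ 2 := by
    have h := mem_closedBall.1 hVc
    rw [dist_eq_norm] at h
    rw [hY, hv, real_inner_self_eq_norm_sq]
    exact pow_le_pow_left₀ (norm_nonneg _) h 2
  -- side length equations
  have sq1 : ∀ P Q : EuclideanSpace ℝ (Fin 2), dist P Q = 1 →
      (@inner ℝ _ _ ((P - c) - (Q - c)) ((P - c) - (Q - c))) = 1 := by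
    intro P Q h
    rw [sub_sub_sub_cancel_right, real_inner_self_eq_norm_sq, ← dist_eq_norm, h]
    norm_num
  have hE1 : X + Y - 2*A = 1 := by
    have h := sq1 U V hUV
    have h2 : ((1:ℝ)) • u + (-1:ℝ) • v + (0:ℝ) • w = (U - c) - (V - c) := by
      rw [hu, hv, hw]; module
    rw [← h2, expand 1 (-1) 0] at h
    linarith [h]
  have hE2 : Y + Z - 2*C = 1 := by
    have h := sq1 V W hVW
    have h2 : ((0:ℝ)) • u + (1:ℝ) • v + (-1:ℝ) • w = (V - c) - (W - c) := by
      rw [hu, hv, hw]; module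
    rw [← h2, expand 0 1 (-1)] at h
    linarith [h]
  have hE3 : X + Z - 2*B = 1 := by
    have h := sq1 U W hUW
    have h2 : ((1:ℝ)) • u + (0:ℝ) • v + (-1:ℝ) • w = (U - c) - (W - c) := by
      rw [hu, hv, hw]; module
    rw [← h2, expand 1 0 (-1)] at h
    linarith [h]
  -- M₂ - c as a combination
  have hk : (t / 2)⁻¹ = 2*t/3 := by
    rw [inv_div]
    rw [div_eq_div_iff ht0.ne' (by norm_num : (3:ℝ) ≠ 0)]
    nlinarith
  have hM2vec : (t/3) • u + (1 - 2*t/3) • v + (t/3) • w = M₂ - c := by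
    rw [hM₂, midpoint_eq_smul_add, invOf_eq_inv, hk, hu, hv, hw]
    module
  have h4 : (t/3)^2*X + (1-2*t/3)^2*Y + (t/3)^2*Z + 2*(t/3)*(1-2*t/3)*A
      + 2*(t/3)*(t/3)*B + 2*(1-2*t/3)*(t/3)*C ≤ r ^ 2 := by
    have h := mem_closedBall.1 hM2c
    rw [dist_eq_norm] at h
    have h' : (@inner ℝ _ _ (M₂ - c) (M₂ - c)) ≤ r ^ 2 := by
      rw [real_inner_self_eq_norm_sq]
      exact pow_le_pow_left₀ (norm_nonneg _) h 2
    rw [← hM2vec, expand (t/3) (1-2*t/3) (t/3)] at h'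
    exact h'
  have hz : 0 ≤ (1-t/3)^2*X + (1-t/3)^2*Y + (2*t/3-1)^2*Z + 2*(1-t/3)*(1-t/3)*A
      + 2*(1-t/3)*(2*t/3-1)*B + 2*(1-t/3)*(2*t/3-1)*C := by
    rw [← expand (1-t/3) (1-t/3) (2*t/3-1)]
    exact real_inner_self_nonneg
  -- the key algebraic identity
  have key : r^2 - (2 - t) =
      (2-t)*(r^2 - X) + (2*t-3)*(r^2 - Y)
      + (2-t)*(r^2 - ((t/3)^2*X + (1-2*t/3)^2*Y + (t/3)^2*Z + 2*(t/3)*(1-2*t/3)*A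
          + 2*(t/3)*(t/3)*B + 2*(1-2*t/3)*(t/3)*C))
      + ((1-t/3)^2*X + (1-t/3)^2*Y + (2*t/3-1)^2*Z + 2*(1-t/3)*(1-t/3)*A
          + 2*(1-t/3)*(2*t/3-1)*B + 2*(1-t/3)*(2*t/3-1)*C) := by
    linear_combination (11/3 - 2*t)*hE1 + (2/3 - t/3)*hE2 + (-7/3 + 4*t/3)*hE3
      + ((1-t)/9*X + (19-4*t)/9*Y + (-2-t)/9*Z + (4*t-16)/9*A + (8-2*t)/9*B
          + (4*t-10)/9*C)*ht3
  have s1 : 0 ≤ (2-t)*(r^2 - X) := mul_nonneg (by linarith) (by linarith)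
  have s2 : 0 ≤ (2*t-3)*(r^2 - Y) := mul_nonneg (by linarith) (by linarith)
  have s4 : 0 ≤ (2-t)*(r^2 - ((t/3)^2*X + (1-2*t/3)^2*Y + (t/3)^2*Z + 2*(t/3)*(1-2*t/3)*A
      + 2*(t/3)*(t/3)*B + 2*(1-2*t/3)*(t/3)*C)) := mul_nonneg (by linarith) (by linarith)
  have hfin : 2 - t ≤ r ^ 2 := by linarith
  -- contradiction with r < (√3 - 1)/√2
  have hs2 : Real.sqrt 2 ^ 2 = 2 := Real.sq_sqrt (by norm_num)
  have hs2pos : 0 < Real.sqrt 2 := Real.sqrt_pos.2 (by norm_num)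
  have hq : 0 < (t - 1) / Real.sqrt 2 := by
    apply div_pos (by linarith) hs2pos
  have hsq : r ^ 2 < ((t - 1) / Real.sqrt 2) ^ 2 := by
    have := mul_pos (sub_pos.2 hr) (by linarith : 0 < (t - 1) / Real.sqrt 2 + r)
    nlinarith
  rw [div_pow, hs2] at hsq
  nlinarith [hsq, hfin, ht3]
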